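/- arXiv:1701.00260 — 2 statements merged into one kernel-verified Lean document; each statement's English description precedes it below -/
import Mathlib

section
/- Suppose every compatible binary relation on an algebra A that contains a homomorphic image of the k-cycle (k odd) contains a loop. Then every compatible binary relation on A that contains a homomorphic image of the k²-cycle contains a loop. Hence the k-cycle loop condition implies the k²-cycle loop condition. -/
/-- An algebra with signature given by operation symbols `ι` and arities `ar`. -/
structure Alg (ι : Type*) (ar : ι → ℕ) (A : Type*) where
  op : (i : ι) → (Fin (ar i) → A) → A

/-- Terms over the signature `(ι, ar)` with variables from `V`. -/
inductive Term (ι : Type*) (ar : ι → ℕ) (V : Type*) : Type _ where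
  | var : V → Term ι ar V
  | app : (i : ι) → (Fin (ar i) → Term ι ar V) → Term ι ar V

/-- Evaluation of a term in an algebra under an assignment of the variables. -/
def Alg.eval {ι : Type*} {ar : ι → ℕ} {A V : Type*} (𝔸 : Alg ι ar A)
    (σ : V → A) : Term ι ar V → A
  | .var x => σ x
  | .app i ts => 𝔸.op i fun k => 𝔸.eval σ (ts k)

/-- A binary relation `R` is compatible with the algebra `𝔸` (i.e. `R` is a
subuniverse of `𝔸²`) if it is closed under all operations applied
coordinatewise. -/
def Compatible {ι : Type*} {ar : ι → ℕ} {A : Type*} (𝔸 : Alg ι ar A)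
    (R : A → A → Prop) : Prop :=
  ∀ (i : ι) (x y : Fin (ar i) → A), (∀ k, R (x k) (y k)) →
    R (𝔸.op i x) (𝔸.op i y)

/-- `n`-fold relational composition of `R`: walks of length `n`. -/
def RelPow {A : Type*} (R : A → A → Prop) : ℕ → A → A → Prop
  | 0 => Eq
  | n+1 => fun a b => ∃ c, R a c ∧ RelPow R n c b

lemma relPow_compat {ι : Type*} {ar : ι → ℕ} {A : Type*} (𝔸 : Alg ι ar A)
    (R : A → A → Prop) (hR : Compatible 𝔸 R) :
    ∀ n, Compatible 𝔸 (RelPow R n)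
  | 0 => by
    intro i x y h
    simp only [RelPow] at h ⊢
    exact congrArg _ (funext h)
  | n+1 => by
    intro i x y h
    simp only [RelPow] at h ⊢
    choose c hc1 hc2 using h
    exact ⟨𝔸.op i c, hR i x c hc1, relPow_compat 𝔸 R hR n i c y hc2⟩

lemma relPow_walk {A : Type*} {R : A → A → Prop} {m : ℕ} {f : ZMod m → A}
    (hf : ∀ i, R (f i) (f (i + 1))) :
    ∀ (n : ℕ) (x : ZMod m), RelPow R n (f x) (f (x + n))
  | 0, x => by
    simp only [Nat.cast_zero, add_zero, RelPow]
  | n+1, x => by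
    have hx : x + ((n+1 : ℕ) : ZMod m) = (x + 1) + n := by push_cast; ring
    rw [hx]
    exact ⟨f (x + 1), hf x, relPow_walk hf n (x + 1)⟩

lemma relPow_extract {A : Type*} {R : A → A → Prop} :
    ∀ {n : ℕ} {a b : A}, RelPow R n a b →
      ∃ c : ℕ → A, c 0 = a ∧ c n = b ∧ ∀ j < n, R (c j) (c (j+1))
  | 0, a, b, h => ⟨fun _ => a, rfl, h, fun j hj => absurd hj (Nat.not_lt_zero j)⟩
  | n+1, a, b, h => by
    obtain ⟨d, hd, ht⟩ := h
    obtain ⟨c, hc0, hcn, hcs⟩ := relPow_extract ht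
    refine ⟨fun j => if j = 0 then a else c (j-1), rfl, by simp [hcn], ?_⟩
    intro j hj
    cases j with
    | zero =>
      show R (if 0 = 0 then a else c (0-1)) (if 1 = 0 then a else c (1-1))
      simpa [hc0] using hd
    | succ m =>
      show R (if m+1 = 0 then a else c (m+1-1)) (if m+2 = 0 then a else c (m+2-1))
      simpa using hcs m (by omega)

/-- Suppose every compatible binary relation on the algebra `𝔸` containing a
homomorphic image of the `k`-cycle (`k` odd) contains a loop. Then every
compatible binary relation on `𝔸` containing a homomorphic image of the
`k²`-cycle contains a loop. (Hence the `k`-cycle loop condition implies the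
`k²`-cycle loop condition.) -/
theorem cycle_loop_condition_square {ι : Type*} {ar : ι → ℕ} {A : Type*}
    (𝔸 : Alg ι ar A) (k : ℕ) (hk : Odd k)
    (H : ∀ R : A → A → Prop, Compatible 𝔸 R →
      (∃ f : ZMod k → A, ∀ i, R (f i) (f (i + 1))) → ∃ a, R a a) :
    ∀ R : A → A → Prop, Compatible 𝔸 R →
      (∃ f : ZMod (k ^ 2) → A, ∀ i, R (f i) (f (i + 1))) → ∃ a, R a a := by
  intro R hR ⟨f, hf⟩
  haveI : NeZero k := ⟨hk.pos.ne'⟩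
  have hval : ∀ i : ZMod k, (i + 1).val = (i.val + 1) % k := by
    intro i
    rw [ZMod.val_add, ZMod.val_one_eq_one_mod]
    exact Nat.ModEq.add_left i.val (Nat.mod_modEq 1 k)
  -- g is a k-cycle in `RelPow R k`
  have hgcyc : ∀ i : ZMod k,
      RelPow R k (f ((k : ZMod (k^2)) * (i.val : ℕ)))
        (f ((k : ZMod (k^2)) * ((i+1).val : ℕ))) := by
    intro i
    have h2 : (i.val + 1) % k ≡ i.val + 1 [MOD k] := Nat.mod_modEq _ k
    have h3 : k * ((i.val + 1) % k) ≡ k * (i.val + 1) [MOD k * k] := h2.mul_left' k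
    have hmod : k * (i+1).val ≡ k * i.val + k [MOD k^2] := by
      rw [hval i, sq]
      calc k * ((i.val + 1) % k) ≡ k * (i.val + 1) [MOD k * k] := h3
        _ = k * i.val + k := by ring
    have key : (k : ZMod (k^2)) * (((i+1).val : ℕ) : ZMod (k^2))
        = (k : ZMod (k^2)) * ((i.val : ℕ) : ZMod (k^2)) + (k : ℕ) := by
      have := (ZMod.natCast_eq_natCast_iff _ _ _).mpr hmod
      push_cast at this
      exact this
    rw [key]
    exact relPow_walk hf k _
  obtain ⟨a, ha⟩ := H (RelPow R k) (relPow_compat 𝔸 R hR k)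
    ⟨fun i => f ((k : ZMod (k^2)) * (i.val : ℕ)), hgcyc⟩
  obtain ⟨c, hc0, hck, hcs⟩ := relPow_extract ha
  refine H R hR ⟨fun i => c i.val, fun i => ?_⟩
  show R (c i.val) (c (i+1).val)
  have hlt := ZMod.val_lt i
  rcases Nat.lt_or_ge (i.val + 1) k with h | h
  · rw [hval i, Nat.mod_eq_of_lt h]
    exact hcs i.val (by omega)
  · have he : i.val + 1 = k := by omega
    have h0 : (i+1).val = 0 := by rw [hval i, he, Nat.mod_self]
    have := hcs i.val (by omega)
    rw [he, hck, ← hc0] at this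
    rw [h0]
    exact this
end

section
/- For the affine algebra on ℤ/2ℤ with term operations exactly the sums x₁ + ⋯ + x_k of an odd number of variables (mod 2), there is no binary term t with t(x,y) = t(y,x) for all x, y, but the 6-ary term s(x₁,…,x₆) = x₁ + x₂ + x₃ satisfies the Siggers identity s(x,y,y,z,z,x) = s(y,x,z,y,x,z); hence the triangle loop condition does not imply the edge loop condition. -/
/-- For the idempotent affine algebra on `ℤ/2ℤ`, whose `n`-ary term operations
are exactly the sums `∑ cᵢ xᵢ` with `∑ cᵢ = 1` (mod 2) (sums of an odd number
of variables): there is no commutative binary term, but some 6-ary term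
satisfies the Siggers identity `s(x,y,y,z,z,x) = s(y,x,z,y,x,z)`; hence the
triangle loop condition does not imply the edge loop condition. -/
theorem zmod2_siggers_not_commutative :
    (¬ ∃ a b : ZMod 2, a + b = 1 ∧ ∀ x y : ZMod 2,
        a * x + b * y = a * y + b * x) ∧
    (∃ c : Fin 6 → ZMod 2, (c 0 + c 1 + c 2 + c 3 + c 4 + c 5 = 1) ∧
      ∀ x y z : ZMod 2,
        c 0 * x + c 1 * y + c 2 * y + c 3 * z + c 4 * z + c 5 * x =
        c 0 * y + c 1 * x + c 2 * z + c 3 * y + c 4 * x + c 5 * z) := by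
  constructor
  · decide
  · exact ⟨![1,0,1,0,1,0], by decide, by decide⟩
end
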